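/- arXiv:0812.4549 — 2 statements merged into one kernel-verified Lean document; each statement's English description precedes it below -/
import Mathlib

section
/- For λ = (λ₁,…,λₙ) ∈ ℝⁿ in the k-positive cone Γ_k (i.e. S_j(λ) > 0 for j = 1,…,k, where S_j is the normalized j-th elementary symmetric function), the partial derivative ∂S_k/∂λ_i is strictly positive for every i = 1,…,n. -/
/-!
Writing `λ'` for `λ` with the `i`-th entry removed, `σ_k(λ) = σ_k(λ') + λ_i σ_{k-1}(λ')`, so
`∂S_k/∂λ_i = σ_{k-1}(λ') / C(n,k)` and it suffices to show `λ' ∈ Γ_{k-1}`. This goes by induction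
on the degree: if `σ_{j}(λ') > 0 ≥ σ_{j+1}(λ')` while `σ_{j+1}(λ), σ_{j+2}(λ) > 0`, the first
expansion forces `λ_i > 0` and then the second forces `σ_j σ_{j+2} > σ_{j+1}²` for `λ'`,
contradicting Newton's inequality. Newton's inequality comes from Rolle's theorem: the derivatives
of the real-rooted polynomial `∏ (X + λ_l)` are real-rooted, and a real-rooted polynomial satisfies
`2 c₀ c₂ ≤ c₁²`, an inequality preserved under products.
-/

/-- Normalized `k`-th elementary symmetric function on `ℝⁿ`. -/
noncomputable def S (n k : ℕ) (x : Fin n → ℝ) : ℝ :=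
  (∑ t ∈ Finset.univ.powersetCard k, ∏ i ∈ t, x i) / (n.choose k : ℝ)

/-- The `k`-positive (Gårding) cone `Γ_k ⊆ ℝⁿ`. -/
def Gamma (n k : ℕ) : Set (Fin n → ℝ) :=
  {x | ∀ j, 1 ≤ j → j ≤ k → 0 < S n j x}

open Polynomial
open scoped Nat

namespace Polynomial

theorem Splits.two_mul_coeff_zero_mul_coeff_two_le_sq {R : Type*} [CommRing R] [LinearOrder R]
    [IsStrictOrderedRing R] {f : R[X]} (hf : f.Splits) :
    2 * f.coeff 0 * f.coeff 2 ≤ f.coeff 1 ^ 2 := by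
  induction hf using Submonoid.closure_induction with
  | mem f hf => rcases hf with ⟨a, rfl⟩ | ⟨a, rfl⟩ <;> simp [coeff_C, coeff_X]
  | one => simp [coeff_one]
  | mul f g _ _ hf hg =>
    have h0 : (f * g).coeff 0 = f.coeff 0 * g.coeff 0 := mul_coeff_zero f g
    have h1 : (f * g).coeff 1 = f.coeff 0 * g.coeff 1 + f.coeff 1 * g.coeff 0 := by
      simp [coeff_mul, Finset.Nat.antidiagonal_succ]
    have h2 : (f * g).coeff 2 =
        f.coeff 0 * g.coeff 2 + f.coeff 1 * g.coeff 1 + f.coeff 2 * g.coeff 0 := by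
      simp [coeff_mul, Finset.Nat.antidiagonal_succ]; ring
    rw [h0, h1, h2]
    -- `(fg)₁² - 2(fg)₀(fg)₂ = f₀²(g₁² - 2g₀g₂) + g₀²(f₁² - 2f₀f₂)`
    nlinarith [mul_le_mul_of_nonneg_left (sub_nonneg.2 hg) (sq_nonneg (f.coeff 0)),
      mul_le_mul_of_nonneg_left (sub_nonneg.2 hf) (sq_nonneg (g.coeff 0))]

theorem Splits.derivative {p : ℝ[X]} (hp : p.Splits) : p.derivative.Splits := by
  rw [splits_iff_card_roots] at hp ⊢
  refine le_antisymm (card_roots' _) ?_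
  rw [natDegree_derivative]
  have := p.card_roots_le_derivative
  omega

theorem Splits.iterate_derivative {p : ℝ[X]} (hp : p.Splits) (m : ℕ) :
    (Polynomial.derivative^[m] p).Splits := by
  induction m with
  | zero => exact hp
  | succ m ih => rw [Function.iterate_succ_apply']; exact ih.derivative

end Polynomial

namespace Multiset

theorem esymm_cons_succ {R : Type*} [CommSemiring R] (a : R) (s : Multiset R) (j : ℕ) :
    (a ::ₘ s).esymm (j + 1) = s.esymm (j + 1) + a * s.esymm j := by
  simp [esymm, powersetCard_cons, map_map, sum_map_mul_left]

theorem factorial_mul_coeff_iterate_derivative_prod_X_add_C {R : Type*} [CommSemiring R]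
    (s : Multiset R) {l m : ℕ} (h : l + m ≤ card s) :
    (l ! : R) * (derivative^[m] (s.map (X + C ·)).prod).coeff l =
      (l + m)! * s.esymm (card s - (l + m)) := by
  have := Nat.factorial_mul_descFactorial (Nat.le_add_left m l)
  rw [Nat.add_sub_cancel] at this
  rw [coeff_iterate_derivative, prod_X_add_C_coeff _ h, nsmul_eq_mul, ← mul_assoc, ← Nat.cast_mul,
    this]

theorem mul_esymm_mul_esymm_le (s : Multiset ℝ) {j m : ℕ} (hs : card s = m + (j + 2)) :
    (m + 2) * (s.esymm j * s.esymm (j + 2)) ≤ (m + 1) * s.esymm (j + 1) ^ 2 := by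
  set D := derivative^[m] (s.map (X + C ·)).prod
  have hD : D.Splits := (Splits.multisetProd (by simp [Splits.X_add_C])).iterate_derivative m
  have hc (l : ℕ) (hl : l ≤ 2) : (l ! : ℝ) * D.coeff l = (l + m)! * s.esymm (j + 2 - l) := by
    rw [factorial_mul_coeff_iterate_derivative_prod_X_add_C _ (by omega), hs]
    congr 2
    omega
  have c₀ := hc 0 (by norm_num)
  have c₁ := hc 1 (by norm_num)
  have c₂ := hc 2 le_rfl
  simp only [add_comm _ m, add_zero, Nat.factorial_succ, Nat.factorial_zero] at c₀ c₁ c₂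
  push_cast at c₀ c₁ c₂
  rw [one_mul] at c₀ c₁
  refine le_of_mul_le_mul_left ?_ (by positivity : (0 : ℝ) < (m + 1) * (m ! : ℝ) ^ 2)
  calc (m + 1) * (m ! : ℝ) ^ 2 * ((m + 2) * (s.esymm j * s.esymm (j + 2)))
      = D.coeff 0 * (2 * D.coeff 2) := by rw [c₀, c₂]; ring
    _ ≤ D.coeff 1 ^ 2 := by linarith [hD.two_mul_coeff_zero_mul_coeff_two_le_sq]
    _ = (m + 1) * (m ! : ℝ) ^ 2 * ((m + 1) * s.esymm (j + 1) ^ 2) := by rw [c₁]; ring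

theorem esymm_mul_esymm_le_sq (s : Multiset ℝ) (j : ℕ) :
    s.esymm j * s.esymm (j + 2) ≤ s.esymm (j + 1) ^ 2 := by
  obtain hs | ⟨m, hm⟩ : card s < j + 2 ∨ ∃ m, card s = m + (j + 2) :=
    (lt_or_ge _ _).imp_right Nat.exists_eq_add_of_le'
  · simp [esymm, powersetCard_eq_empty _ hs, sq_nonneg]
  nlinarith [s.mul_esymm_mul_esymm_le hm, sq_nonneg (s.esymm (j + 1))]

theorem esymm_succ_pos_of_cons {a : ℝ} {s : Multiset ℝ} {j : ℕ} (hj : 0 < s.esymm j)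
    (h₁ : 0 < (a ::ₘ s).esymm (j + 1)) (h₂ : 0 < (a ::ₘ s).esymm (j + 2)) :
    0 < s.esymm (j + 1) := by
  rw [esymm_cons_succ] at h₁ h₂
  have := s.esymm_mul_esymm_le_sq j
  by_contra! h
  nlinarith

theorem esymm_pos_of_cons {a : ℝ} {s : Multiset ℝ} {k : ℕ}
    (h : ∀ j ≤ k, 0 < (a ::ₘ s).esymm j) : ∀ j < k, 0 < s.esymm j := by
  intro j hj
  induction j with
  | zero => simp [esymm]
  | succ j ih => exact esymm_succ_pos_of_cons (ih (by omega)) (h _ (by omega)) (h _ hj)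

end Multiset

theorem Finset.univ_val_map_eq_cons {ι R : Type*} [Fintype ι] [DecidableEq ι] (f : ι → R)
    (i : ι) : univ.val.map f = f i ::ₘ (univ.erase i).val.map f := by
  rw [Finset.erase_val, ← Multiset.map_cons, Multiset.cons_erase (Finset.mem_univ_val i)]

theorem S_eq_esymm (n k : ℕ) (x : Fin n → ℝ) :
    S n k x = (Finset.univ.val.map x).esymm k / n.choose k := by
  rw [S, Finset.esymm_map_val]

-- `S n k = 0 / 0 = 0` when `n < k`
theorem S_pos_iff (n k : ℕ) (x : Fin n → ℝ) :
    0 < S n k x ↔ 0 < (Finset.univ.val.map x).esymm k ∧ (0 : ℝ) < n.choose k := by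
  rw [S_eq_esymm, div_pos_iff, or_iff_left (fun h => (Nat.cast_nonneg _).not_gt h.2)]

theorem esymm_pos_of_mem_Gamma {n k : ℕ} {x : Fin n → ℝ} (hx : x ∈ Gamma n k) :
    ∀ j ≤ k, 0 < (Finset.univ.val.map x).esymm j := by
  rintro (_ | j) hj
  · simp [Multiset.esymm]
  · exact ((S_pos_iff n _ x).1 (hx (j + 1) (by omega) hj)).1

theorem S_succ_add_smul_single (n j : ℕ) (x : Fin n → ℝ) (i : Fin n) (t : ℝ) :
    S n (j + 1) (x + t • Pi.single i 1) =
      S n (j + 1) x + t * (((Finset.univ.erase i).val.map x).esymm j / n.choose (j + 1)) := by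
  have hoff : (Finset.univ.erase i).val.map (x + t • Pi.single i 1) =
      (Finset.univ.erase i).val.map x :=
    Multiset.map_congr rfl fun l hl => by simp [Finset.ne_of_mem_erase (Finset.mem_def.2 hl)]
  rw [S_eq_esymm, S_eq_esymm, Finset.univ_val_map_eq_cons _ i, Finset.univ_val_map_eq_cons x i,
    hoff, Multiset.esymm_cons_succ, Multiset.esymm_cons_succ]
  simp only [Pi.add_apply, Pi.smul_apply, Pi.single_eq_same, smul_eq_mul, mul_one]
  ring

theorem fderiv_S_succ_single (n j : ℕ) (x : Fin n → ℝ) (i : Fin n) :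
    fderiv ℝ (S n (j + 1)) x (Pi.single i 1) =
      ((Finset.univ.erase i).val.map x).esymm j / n.choose (j + 1) := by
  have hdiff : DifferentiableAt ℝ (S n (j + 1)) x := by unfold S; fun_prop
  rw [← hdiff.lineDeriv_eq_fderiv]
  refine HasLineDerivAt.lineDeriv ?_
  unfold HasLineDerivAt
  simp only [S_succ_add_smul_single]
  simpa using ((hasDerivAt_id (0 : ℝ)).mul_const _).const_add (S n (j + 1) x)

theorem partial_Sk_pos_general (n k : ℕ) (hk1 : 1 ≤ k)
    (lam : Fin n → ℝ) (hlam : lam ∈ Gamma n k) (i : Fin n) :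
    0 < fderiv ℝ (S n k) lam (Pi.single i 1) := by
  obtain ⟨j, rfl⟩ := Nat.exists_eq_add_of_le' hk1
  rw [fderiv_S_succ_single]
  have hchoose := ((S_pos_iff n _ lam).1 (hlam (j + 1) hk1 le_rfl)).2
  have hpos := esymm_pos_of_mem_Gamma hlam
  rw [Finset.univ_val_map_eq_cons lam i] at hpos
  exact div_pos (Multiset.esymm_pos_of_cons hpos j j.lt_succ_self) hchoose

theorem partial_Sk_pos (n k : ℕ) (hk1 : 1 ≤ k) (hkn : k ≤ n)
    (lam : Fin n → ℝ) (hlam : lam ∈ Gamma n k) (i : Fin n) :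
    0 < fderiv ℝ (S n k) lam (Pi.single i 1) :=
  partial_Sk_pos_general n k hk1 lam hlam i
end

section
/- (Maclaurin inequalities) If λ ∈ Γ_k (i.e. S_j(λ) > 0 for j = 1,…,k), then 0 < S_k(λ)^{1/k} ≤ S_{k-1}(λ)^{1/(k-1)} ≤ ⋯ ≤ S_2(λ)^{1/2} ≤ S_1(λ). -/
/-!
Maclaurin's chain follows from Newton's inequalities `E_r E_{r+2} ≤ E_{r+1}²` for the means
`E_r = e_r / C(m, r)` of the elementary symmetric functions of a real multiset of size `m`:
a positive log-concave sequence with `E_0 = 1` has `E_r ^ (1 / r)` nonincreasing.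

Newton's inequalities go by induction on `m`. By Rolle's theorem the derivative of `∏ (X - a)`
again has only real roots, and those roots have the same means `E_0, …, E_{m-1}`. When
`m = r + 2`, either some `a = 0` and `E_{r+2} = 0`, or passing to the reciprocals `a⁻¹` reverses
the means and leaves `E_2 ≤ E_1²`, which is Cauchy–Schwarz.
-/

open Polynomial

namespace Multiset

section CommSemiring

variable {R : Type*} [CommSemiring R]

theorem esymm_cons (a : R) (s : Multiset R) (k : ℕ) :
    (a ::ₘ s).esymm (k + 1) = s.esymm (k + 1) + a * s.esymm k := by
  simp [esymm, powersetCard_cons, sum_map_mul_left]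

@[simp]
theorem esymm_zero (s : Multiset R) : s.esymm 0 = 1 := by
  simp [esymm]

theorem esymm_one (s : Multiset R) : s.esymm 1 = s.sum := by
  simp [esymm, powersetCard_one]

theorem esymm_eq_zero_of_card_lt (s : Multiset R) {k : ℕ} (h : card s < k) : s.esymm k = 0 := by
  simp [esymm, powersetCard_eq_empty _ h]

end CommSemiring

theorem two_mul_esymm_two {R : Type*} [CommRing R] (s : Multiset R) :
    2 * s.esymm 2 = s.sum ^ 2 - (s.map (· ^ 2)).sum := by
  induction s using Multiset.induction_on with
  | empty => simp [esymm_eq_zero_of_card_lt (0 : Multiset R) (k := 2) (by simp)]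
  | cons a s ih =>
    rw [esymm_cons, mul_add, ih, esymm_one, sum_cons, map_cons, sum_cons]
    ring

theorem esymm_eq_prod_mul_esymm_map_inv {K : Type*} [Field K] {s : Multiset K} (hs : (0 : K) ∉ s)
    {i j : ℕ} (hij : i + j = card s) : s.esymm i = s.prod * (s.map (·⁻¹)).esymm j := by
  induction s using Multiset.induction_on generalizing i j with
  | empty =>
    obtain ⟨rfl, rfl⟩ : i = 0 ∧ j = 0 := by simpa using hij
    simp
  | cons a s ih =>
    have ha : a ≠ 0 := fun h => hs (h ▸ mem_cons_self a s)
    have hs0 : (0 : K) ∉ s := fun h => hs (mem_cons_of_mem h)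
    rw [card_cons] at hij
    rw [prod_cons, map_cons]
    rcases i with _ | i <;> rcases j with _ | j
    · omega
    · have hj : j = card s := by omega
      have h := ih hs0 (i := 0) (j := j) (by omega)
      rw [esymm_cons, esymm_eq_zero_of_card_lt (s.map (·⁻¹)) (k := j + 1) (by simp [hj])]
      field_simp
      simpa using h
    · rw [esymm_cons, esymm_eq_zero_of_card_lt s (k := i + 1) (by omega),
        ih hs0 (i := i) (j := 0) (by omega)]
      simp
    · rw [esymm_cons, esymm_cons, ih hs0 (i := i + 1) (j := j) (by omega),
        ih hs0 (i := i) (j := j + 1) (by omega)]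
      field_simp
      ring

theorem sq_sum_le_card_mul_sum_sq (s : Multiset ℝ) :
    s.sum ^ 2 ≤ card s * (s.map (· ^ 2)).sum := by
  induction s using Quotient.inductionOn with
  | h l =>
    have h := _root_.sq_sum_le_card_mul_sum_sq (s := Finset.univ) (f := l.get)
    simp only [← List.sum_ofFn, Finset.card_univ, Fintype.card_fin, List.get_eq_getElem,
      List.ofFn_getElem_eq_map l (· ^ 2)] at h
    simpa using h

noncomputable def esymmMean (s : Multiset ℝ) (k : ℕ) : ℝ :=
  s.esymm k / (card s).choose k

@[simp]
theorem esymmMean_zero (s : Multiset ℝ) : s.esymmMean 0 = 1 := by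
  simp [esymmMean]

theorem esymmMean_eq_zero_of_card_lt (s : Multiset ℝ) {k : ℕ} (h : card s < k) :
    s.esymmMean k = 0 := by
  simp [esymmMean, esymm_eq_zero_of_card_lt s h]

theorem esymmMean_two_le_sq (s : Multiset ℝ) : s.esymmMean 2 ≤ s.esymmMean 1 ^ 2 := by
  rcases lt_or_ge (card s) 2 with hs | hs
  · rw [esymmMean_eq_zero_of_card_lt s hs]
    positivity
  have hm : (2 : ℝ) ≤ card s := by exact_mod_cast hs
  have hCS := sq_sum_le_card_mul_sum_sq s
  have h2 := two_mul_esymm_two s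
  rw [esymmMean, esymmMean, esymm_one, Nat.cast_choose_two, Nat.choose_one_right, div_pow,
    div_le_div_iff₀ (by nlinarith) (by positivity)]
  nlinarith

theorem esymmMean_eq_prod_mul_esymmMean_map_inv {s : Multiset ℝ} (hs : (0 : ℝ) ∉ s)
    {i j : ℕ} (hij : i + j = card s) :
    s.esymmMean i = s.prod * (s.map (·⁻¹)).esymmMean j := by
  rw [esymmMean, esymmMean, esymm_eq_prod_mul_esymm_map_inv hs hij, card_map,
    Nat.choose_symm_of_eq_add hij.symm, mul_div_assoc]

theorem esymmMean_mul_le_sq_of_card_eq (s : Multiset ℝ) {r : ℕ} (hs : card s = r + 2) :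
    s.esymmMean r * s.esymmMean (r + 2) ≤ s.esymmMean (r + 1) ^ 2 := by
  by_cases h0 : (0 : ℝ) ∈ s
  · have hprod : s.esymmMean (r + 2) = 0 := by
      simp [esymmMean, ← hs, esymm, prod_eq_zero h0]
    rw [hprod, mul_zero]
    positivity
  -- reading the three means backwards turns them into means of degree 2, 1, 0 of the inverses
  set t := s.map (·⁻¹)
  rw [esymmMean_eq_prod_mul_esymmMean_map_inv h0 (i := r) (j := 2) hs.symm,
    esymmMean_eq_prod_mul_esymmMean_map_inv h0 (i := r + 1) (j := 1) (by omega),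
    esymmMean_eq_prod_mul_esymmMean_map_inv h0 (i := r + 2) (j := 0) (by omega), esymmMean_zero]
  nlinarith [mul_le_mul_of_nonneg_left t.esymmMean_two_le_sq (sq_nonneg s.prod)]

theorem card_roots_derivative_prod_X_sub_C (s : Multiset ℝ) :
    card (derivative (s.map fun a => X - C a).prod).roots = card s - 1 := by
  set p := (s.map fun a => X - C a).prod
  have hroots : card p.roots = card s := by rw [roots_multiset_prod_X_sub_C]
  have hdeg : p.natDegree = card s := natDegree_multiset_prod_X_sub_C_eq_card s
  have hle := (card_roots' (derivative p)).trans (natDegree_derivative_le p)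
  have hge := card_roots_le_derivative p
  omega

theorem exists_card_eq_esymmMean_eq {m : ℕ} (s : Multiset ℝ) (hs : card s = m + 1) :
    ∃ t : Multiset ℝ, card t = m ∧ ∀ j ≤ m, t.esymmMean j = s.esymmMean j := by
  set p := (s.map fun a => X - C a).prod
  set q := derivative p
  have hq : card q.roots = m := by rw [card_roots_derivative_prod_X_sub_C, hs]; rfl
  have hqdeg : q.natDegree = m := by
    refine le_antisymm ?_ (hq ▸ card_roots' q)
    have := natDegree_derivative_le p
    rwa [natDegree_multiset_prod_X_sub_C_eq_card, hs, Nat.add_sub_cancel] at this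
  have hp_coeff (j : ℕ) (hj : j ≤ m) : p.coeff (m - j + 1) = (-1) ^ j * s.esymm j := by
    rw [prod_X_sub_C_coeff s (by omega), hs, show m + 1 - (m - j + 1) = j by omega]
  have hlead : q.leadingCoeff = m + 1 := by
    rw [leadingCoeff, hqdeg, coeff_derivative, ← Nat.sub_zero m, hp_coeff 0 (Nat.zero_le m)]
    simp
  refine ⟨q.roots, hq, fun j hj => ?_⟩
  -- Vieta for `p' = (m + 1) ∏ (X - t)` against the termwise derivative of `p`
  have hvieta : ((m : ℝ) + 1) * q.roots.esymm j = ((m + 1 - j : ℕ) : ℝ) * s.esymm j := by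
    have h := coeff_eq_esymm_roots_of_card (hq.trans hqdeg.symm) (k := m - j) (by omega)
    rw [coeff_derivative, hp_coeff j hj, hlead, hqdeg, Nat.sub_sub_self hj] at h
    have hsign : ((-1 : ℝ) ^ j) ≠ 0 := pow_ne_zero _ (by norm_num)
    apply mul_left_cancel₀ hsign
    push_cast [Nat.cast_sub hj, Nat.cast_sub (by omega : j ≤ m + 1)] at h ⊢
    linear_combination -h
  have hchoose : (m.choose j : ℝ) * (m + 1) = (m + 1).choose j * ((m + 1 - j : ℕ) : ℝ) := by
    exact_mod_cast Nat.choose_mul_succ_eq m j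
  have hCa : (m.choose j : ℝ) ≠ 0 := by exact_mod_cast (Nat.choose_pos hj).ne'
  have hCb : ((m + 1).choose j : ℝ) ≠ 0 := by exact_mod_cast (Nat.choose_pos (by omega)).ne'
  have hd : ((m + 1 - j : ℕ) : ℝ) ≠ 0 := by exact_mod_cast (by omega : m + 1 - j ≠ 0)
  rw [esymmMean, esymmMean, hq, hs, div_eq_div_iff hCa hCb]
  apply mul_left_cancel₀ (mul_ne_zero hd (Nat.cast_add_one_ne_zero m))
  linear_combination (((m + 1 - j : ℕ) : ℝ) * ((m + 1).choose j : ℝ)) * hvieta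
    - (((m + 1 - j : ℕ) : ℝ) * s.esymm j) * hchoose

theorem esymmMean_mul_le_sq (s : Multiset ℝ) (r : ℕ) :
    s.esymmMean r * s.esymmMean (r + 2) ≤ s.esymmMean (r + 1) ^ 2 := by
  rcases lt_or_ge (card s) (r + 2) with hlt | hle
  · rw [esymmMean_eq_zero_of_card_lt s hlt, mul_zero]
    positivity
  -- differentiating `∏ (X - a)` lowers the number of roots and keeps the low-order means
  generalize hm : card s = m at hle
  induction m, hle using Nat.le_induction generalizing s with
  | base => exact esymmMean_mul_le_sq_of_card_eq s hm
  | succ m hrm ih =>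
    obtain ⟨t, ht, hts⟩ := exists_card_eq_esymmMean_eq s hm
    rw [← hts r (by omega), ← hts (r + 1) (by omega), ← hts (r + 2) hrm]
    exact ih t ht

end Multiset

theorem pow_le_pow_succ_of_mul_le_sq {a : ℕ → ℝ} {k : ℕ} (h0 : a 0 = 1)
    (hpos : ∀ j ≤ k, 0 < a j) (hlc : ∀ j, j + 2 ≤ k → a j * a (j + 2) ≤ a (j + 1) ^ 2)
    {j : ℕ} (hj : j + 1 ≤ k) :
    a (j + 1) ^ j ≤ a j ^ (j + 1) := by
  induction j with
  | zero => simp [h0]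
  | succ j ih =>
    have key : a (j + 2) ^ (j + 1) * a (j + 1) ^ j ≤ a (j + 1) ^ (j + 2) * a (j + 1) ^ j :=
      calc a (j + 2) ^ (j + 1) * a (j + 1) ^ j
          ≤ a (j + 2) ^ (j + 1) * a j ^ (j + 1) :=
            mul_le_mul_of_nonneg_left (ih (by omega)) (pow_nonneg (hpos _ hj).le _)
        _ = (a j * a (j + 2)) ^ (j + 1) := by ring
        _ ≤ (a (j + 1) ^ 2) ^ (j + 1) := by
            gcongr
            · exact mul_nonneg (hpos j (by omega)).le (hpos _ hj).le
            · exact hlc j hj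
        _ = a (j + 1) ^ (j + 2) * a (j + 1) ^ j := by ring
    exact le_of_mul_le_mul_right key (pow_pos (hpos (j + 1) (by omega)) j)

theorem Real.rpow_one_div_le_rpow_one_div_of_pow_le_pow {x y : ℝ} (hx : 0 ≤ x) (hy : 0 ≤ y)
    {p q : ℕ} (hp : p ≠ 0) (hq : q ≠ 0) (h : x ^ q ≤ y ^ p) :
    x ^ ((1 : ℝ) / p) ≤ y ^ ((1 : ℝ) / q) := by
  have hpow {z : ℝ} (hz : 0 ≤ z) {a b : ℕ} (ha : a ≠ 0) :
      (z ^ ((1 : ℝ) / a)) ^ (a * b) = z ^ b := by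
    rw [← Real.rpow_mul_natCast hz, ← Real.rpow_natCast]
    congr 1
    field_simp
    push_cast; ring
  rw [← pow_le_pow_iff_left₀ (by positivity) (by positivity) (mul_ne_zero hp hq), hpow hx hp,
    mul_comm, hpow hy hq]
  exact h

theorem S_eq_esymmMean {n : ℕ} (x : Fin n → ℝ) (k : ℕ) :
    S n k x = (Finset.univ.val.map x).esymmMean k := by
  rw [S, Multiset.esymmMean, Finset.esymm_map_val, Multiset.card_map, Finset.card_val,
    Finset.card_univ, Fintype.card_fin]

theorem maclaurin_inequalities_general (n k : ℕ)
    (lam : Fin n → ℝ) (hlam : lam ∈ Gamma n k) :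
    0 < (S n k lam) ^ ((1 : ℝ) / k) ∧
      ∀ j, 2 ≤ j → j ≤ k →
        (S n j lam) ^ ((1 : ℝ) / j) ≤ (S n (j - 1) lam) ^ ((1 : ℝ) / (j - 1)) := by
  have h0 : S n 0 lam = 1 := by simp [S_eq_esymmMean]
  have hpos : ∀ j ≤ k, 0 < S n j lam := by
    intro j hj
    rcases j.eq_zero_or_pos with rfl | hj0
    · simp [h0]
    · exact hlam j hj0 hj
  have hlc (j : ℕ) (_ : j + 2 ≤ k) : S n j lam * S n (j + 2) lam ≤ S n (j + 1) lam ^ 2 := by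
    simpa only [S_eq_esymmMean] using Multiset.esymmMean_mul_le_sq _ j
  refine ⟨Real.rpow_pos_of_pos (hpos k le_rfl) _, fun j hj2 hjk => ?_⟩
  obtain ⟨i, rfl⟩ : ∃ i, j = i + 2 := ⟨j - 2, by omega⟩
  have hpow :=
    pow_le_pow_succ_of_mul_le_sq (a := fun j => S n j lam) h0 hpos hlc (j := i + 1) hjk
  rw [show i + 2 - 1 = i + 1 by omega,
    show ((i + 2 : ℕ) : ℝ) - 1 = ((i + 1 : ℕ) : ℝ) by push_cast; ring]
  exact Real.rpow_one_div_le_rpow_one_div_of_pow_le_pow (hpos _ hjk).le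
    (hpos (i + 1) (by omega)).le (by omega) (by omega) hpow

theorem maclaurin_inequalities (n k : ℕ) (hk1 : 1 ≤ k) (hkn : k ≤ n)
    (lam : Fin n → ℝ) (hlam : lam ∈ Gamma n k) :
    0 < (S n k lam) ^ ((1 : ℝ) / k) ∧
      ∀ j, 2 ≤ j → j ≤ k →
        (S n j lam) ^ ((1 : ℝ) / j) ≤ (S n (j - 1) lam) ^ ((1 : ℝ) / (j - 1)) :=
  maclaurin_inequalities_general n k lam hlam
end
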